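/- arXiv:2001.11647 — 3 statements merged into one kernel-verified Lean document; each statement's English description precedes it below -/
import Mathlib

section
/- Let (λ_x)_{x∈I} be a finite family of vectors in P̄_k. If r does not divide Σ_{x∈I}|λ_x|, then the genus-zero Verlinde number vanishes: V_0(r,0,(λ_x)_{x∈I}) = 0. -/
open scoped BigOperators
open Complex

noncomputable section

namespace VerlindePaper

/-- The Schur value `S_λ(z₁,…,z_r) = det(z_j^{λ_i+r-i}) / det(z_j^{r-i})`
(indices `i` are 0-based, so the exponent is `λ i + (r - 1 - i)`). -/
noncomputable def schur {r : ℕ} (lam : Fin r → ℤ) (z : Fin r → ℂ) : ℂ :=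
  Matrix.det (Matrix.of fun i j : Fin r => z j ^ (lam i + ((r : ℤ) - 1 - (i : ℕ)))) /
    Matrix.det (Matrix.of fun i j : Fin r => z j ^ ((r : ℤ) - 1 - (i : ℕ)))

/-- `ζ_v = (e^{2πi v_1/(r+k)}, …, e^{2πi v_r/(r+k)})`. -/
noncomputable def zeta (r k : ℕ) (v : Fin r → ℤ) : Fin r → ℂ :=
  fun j => Complex.exp (2 * (Real.pi : ℂ) * Complex.I * (v j : ℂ) / ((r : ℂ) + (k : ℂ)))

/-- `D(v) = ∏_{i<j} (2 sin(π(v_i - v_j)/(r+k)))²`. -/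
noncomputable def Dv (r k : ℕ) (v : Fin r → ℤ) : ℝ :=
  ∏ p ∈ Finset.univ.filter (fun p : Fin r × Fin r => p.1 < p.2),
    (2 * Real.sin (Real.pi * ((v p.1 : ℝ) - (v p.2 : ℝ)) / ((r : ℝ) + (k : ℝ)))) ^ 2

/-- `P̄_k = {μ : 0 ≤ μ_r ≤ ⋯ ≤ μ_1 ≤ k}` (0-based: `μ 0 = μ_1`). -/
def Pbar (r k : ℕ) : Finset (Fin r → ℤ) :=
  (Finset.Icc 0 (fun _ => (k : ℤ))).filter (fun μ => ∀ i j : Fin r, i ≤ j → μ j ≤ μ i)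

/-- `P_k = {μ : 0 ≤ μ_r ≤ ⋯ ≤ μ_1 ≤ k-1}`. -/
def Pk (r k : ℕ) : Finset (Fin r → ℤ) :=
  (Finset.Icc 0 (fun _ => (k : ℤ) - 1)).filter (fun μ => ∀ i j : Fin r, i ≤ j → μ j ≤ μ i)

/-- `W_k = {μ ∈ P̄_k : μ_r = 0}`. -/
def Wk (r k : ℕ) : Finset (Fin r → ℤ) :=
  (Pbar r k).filter (fun μ => ∀ i : Fin r, (i : ℕ) = r - 1 → μ i = 0)

/-- `μ* = (k - μ_r, k - μ_{r-1}, …, k - μ_1)`. -/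
def mustar (k : ℕ) {r : ℕ} (μ : Fin r → ℤ) : Fin r → ℤ :=
  fun i => (k : ℤ) - μ i.rev

/-- `μ ∼ ν` iff `μ - ν` is a constant vector. -/
def sim {r : ℕ} (μ ν : Fin r → ℤ) : Prop := ∃ a : ℤ, ∀ i, μ i = ν i + a

/-- The index set of the Verlinde sums: integer vectors with
`0 = v_r < v_{r-1} < ⋯ < v_1 < r + k`. -/
def Vset (r k : ℕ) : Finset (Fin r → ℤ) :=
  (Finset.Icc 0 (fun _ => (r : ℤ) + (k : ℤ) - 1)).filter
    (fun v => (∀ i j : Fin r, i < j → v j < v i) ∧ ∀ i : Fin r, (i : ℕ) = r - 1 → v i = 0)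

/-- The Verlinde number `V_g(r,d,(λ_x)_{x∈I})`. -/
noncomputable def verlinde (r k : ℕ) (g : ℕ) (d : ℤ) {I : Type*} [Fintype I]
    (lam : I → Fin r → ℤ) : ℂ :=
  (-1 : ℂ) ^ (d * ((r : ℤ) - 1)) * ((k : ℂ) / (r : ℂ)) ^ g *
    ((r : ℂ) * ((r : ℂ) + (k : ℂ)) ^ (r - 1)) ^ ((g : ℤ) - 1) *
    ∑ v ∈ Vset r k,
      Complex.exp (2 * (Real.pi : ℂ) * Complex.I *
          ((d : ℂ) / (r : ℂ) -
            (∑ x, ∑ i, (lam x i : ℂ)) / ((r : ℂ) * ((r : ℂ) + (k : ℂ)))) *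
          (∑ i, (v i : ℂ))) *
        (∏ x, schur (lam x) (zeta r k v)) * ((Dv r k v : ℂ)) ^ (1 - (g : ℤ))

/-- The Hecke transformation
`H¹(μ) = (k - μ_{r-1} + μ_r, μ_1 - μ_{r-1}, …, μ_{r-2} - μ_{r-1}, 0)`. -/
def H1 (k : ℕ) {r : ℕ} (μ : Fin r → ℤ) : Fin r → ℤ := fun j =>
  have hj : (j : ℕ) < r := j.isLt
  if (j : ℕ) = 0 then (k : ℤ) - μ ⟨r - 2, by omega⟩ + μ ⟨r - 1, by omega⟩
  else μ ⟨(j : ℕ) - 1, by omega⟩ - μ ⟨r - 2, by omega⟩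

/-- The iterated Hecke transformation `H^m = H¹ ∘ ⋯ ∘ H¹`. -/
def Hm (k : ℕ) {r : ℕ} (m : ℕ) (μ : Fin r → ℤ) : Fin r → ℤ := (H1 k)^[m] μ

/-- `μ ∈ Y(λ, ω_s)`: `μ` is a partition obtained from `λ` by adding `s` boxes,
no two in the same row. -/
def inY {r : ℕ} (lam : Fin r → ℤ) (s : ℕ) (μ : Fin r → ℤ) : Prop :=
  (∀ i j : Fin r, i ≤ j → μ j ≤ μ i) ∧ (∀ i, μ i - lam i = 0 ∨ μ i - lam i = 1) ∧
    (∑ i, μ i) = (∑ i, lam i) + (s : ℤ)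

/-- The Vandermonde product `Δ(z) = ∏_{i<j} (z_i - z_j)`. -/
noncomputable def vand {r : ℕ} (z : Fin r → ℂ) : ℂ :=
  ∏ p ∈ Finset.univ.filter (fun p : Fin r × Fin r => p.1 < p.2), (z p.1 - z p.2)

/-- `J_v(t) = Σ_{τ ∈ S_r} sgn(τ) exp(2πi (Σ_j v_{τ(j)} t_j)/(r+k))`. -/
noncomputable def Jv (r k : ℕ) (v : Fin r → ℤ) (t : Fin r → Fin (r + k)) : ℂ :=
  ∑ τ : Equiv.Perm (Fin r), ((Equiv.Perm.sign τ : ℤ) : ℂ) *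
    Complex.exp (2 * (Real.pi : ℂ) * Complex.I *
      (∑ j, (v (τ j) : ℂ) * ((t j : ℕ) : ℂ)) / ((r : ℂ) + (k : ℂ)))

end VerlindePaper

/-!
The map `rotate k` permutes the alcove points `Vset r k`, and modulo `r + k` it is
`v ↦ v ∘ finRotate - v₀`. So it multiplies `ζ_v` by the root of unity `exp(-2πi v₀/(r+k))` and
permutes its coordinates cyclically. Schur values are symmetric and homogeneous of degree `|λ|`,
and `D(v)` is unchanged by permuting the `v_i` and shifting them all by a common constant
modulo `r + k`. Hence every summand of
`V_g(r, d, λ)` gets multiplied by `exp(2πi (Σ_x |λ_x| - dk)/r)`. This factor is `≠ 1` when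
`r ∤ Σ_x |λ_x| - dk`, and so the sum vanishes.
-/

theorem Finset.sum_eq_zero_of_map_eq_mul {α K : Type*} [Field K] {s : Finset α} {f : α → α}
    (hmaps : Set.MapsTo f s s) (hinj : Set.InjOn f s) {g : α → K} {q : K} (hq : q ≠ 1)
    (hg : ∀ a ∈ s, g (f a) = q * g a) : ∑ a ∈ s, g a = 0 := by
  have hbij : Set.BijOn f s s := (s.finite_toSet.injOn_iff_bijOn_of_mapsTo hmaps).mp hinj
  have hsum : ∑ a ∈ s, g a = q * ∑ a ∈ s, g a := by
    rw [Finset.mul_sum, ← Finset.sum_nbij f hmaps hinj hbij.surjOn (fun _ _ => rfl)]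
    exact Finset.sum_congr rfl hg
  have : (q - 1) * ∑ a ∈ s, g a = 0 := by linear_combination -hsum
  exact (mul_eq_zero.mp this).resolve_left (sub_ne_zero.mpr hq)

theorem Finset.prod_zpow_eq_zpow_sum {ι G : Type*} [CommGroupWithZero G] (s : Finset ι) {a : G}
    (ha : a ≠ 0) (f : ι → ℤ) : ∏ i ∈ s, a ^ f i = a ^ ∑ i ∈ s, f i := by
  classical
  induction s using Finset.induction_on with
  | empty => simp
  | insert _ _ h ih => rw [Finset.prod_insert h, Finset.sum_insert h, zpow_add₀ ha, ih]

theorem Finset.prod_filter_lt_comp_perm {n : ℕ} {M : Type*} [CommMonoid M]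
    (F : Fin n → Fin n → M) (hF : ∀ i j, F i j = F j i) (σ : Equiv.Perm (Fin n)) :
    ∏ p ∈ Finset.univ.filter (fun p : Fin n × Fin n => p.1 < p.2), F (σ p.1) (σ p.2) =
      ∏ p ∈ Finset.univ.filter (fun p : Fin n × Fin n => p.1 < p.2), F p.1 p.2 := by
  let sortAfter (τ : Equiv.Perm (Fin n)) (p : Fin n × Fin n) : Fin n × Fin n :=
    (min (τ p.1) (τ p.2), max (τ p.1) (τ p.2))
  have key : ∀ τ : Equiv.Perm (Fin n), ∀ p : Fin n × Fin n, p.1 < p.2 →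
      (τ p.1 < τ p.2 ∧ sortAfter τ p = (τ p.1, τ p.2)) ∨
      (τ p.2 < τ p.1 ∧ sortAfter τ p = (τ p.2, τ p.1)) := by
    intro τ p hp
    rcases lt_or_gt_of_ne (τ.injective.ne hp.ne) with h | h
    · exact .inl ⟨h, by simp [sortAfter, min_eq_left h.le, max_eq_right h.le]⟩
    · exact .inr ⟨h, by simp [sortAfter, min_eq_right h.le, max_eq_left h.le]⟩
  refine Finset.prod_nbij' (sortAfter σ) (sortAfter σ.symm) ?_ ?_ ?_ ?_ ?_ <;>
    simp only [Finset.mem_filter, Finset.mem_univ, true_and]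
  · intro p hp
    rcases key σ p hp with ⟨h, e⟩ | ⟨h, e⟩ <;> simpa [e]
  · intro p hp
    rcases key σ.symm p hp with ⟨h, e⟩ | ⟨h, e⟩ <;> simpa [e]
  · intro p hp
    rcases key σ p hp with ⟨h, e⟩ | ⟨h, e⟩ <;> simp [e, sortAfter, hp.le]
  · intro p hp
    rcases key σ.symm p hp with ⟨h, e⟩ | ⟨h, e⟩ <;> simp [e, sortAfter, hp.le]
  · intro p hp
    rcases key σ p hp with ⟨h, e⟩ | ⟨h, e⟩ <;> simp [e, hF]

theorem Real.sq_two_mul_sin_add_int_mul_pi (x : ℝ) (m : ℤ) :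
    (2 * Real.sin (x + m * Real.pi)) ^ 2 = (2 * Real.sin x) ^ 2 := by
  rcases Int.even_or_odd m with hm | hm <;> simp [Real.sin_add_int_mul_pi, hm.neg_one_zpow]

theorem Complex.exp_two_pi_I_mul_div_ne_one {r : ℕ} (hr : r ≠ 0) {a : ℤ} (h : ¬ (r : ℤ) ∣ a) :
    Complex.exp (2 * Real.pi * Complex.I * a / r) ≠ 1 := by
  rw [show 2 * Real.pi * Complex.I * a / r = a * (2 * Real.pi * Complex.I / r) by ring,
    Complex.exp_int_mul, ne_eq, (Complex.isPrimitiveRoot_exp r hr).zpow_eq_one_iff_dvd]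
  exact h

namespace VerlindePaper

lemma det_of_mul_zpow_comp_perm {r : ℕ} (z : Fin r → ℂ) {ω : ℂ} (hω : ω ≠ 0)
    (e : Equiv.Perm (Fin r)) (f : Fin r → ℤ) :
    (Matrix.of fun i j : Fin r => (ω * z (e j)) ^ f i).det =
      ω ^ (∑ i, f i) * (Equiv.Perm.sign e * (Matrix.of fun i j : Fin r => z j ^ f i).det) := by
  have hrows : (Matrix.of fun i j : Fin r => (ω * z (e j)) ^ f i) =
      Matrix.of fun i j =>
        ω ^ f i * (Matrix.of fun i j : Fin r => z j ^ f i).submatrix id e i j := by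
    ext i j
    simp [mul_zpow]
  rw [hrows, Matrix.det_mul_column, Matrix.det_permute', Finset.prod_zpow_eq_zpow_sum _ hω]

lemma schur_mul_comp_perm {r : ℕ} (lam : Fin r → ℤ) (z : Fin r → ℂ) {ω : ℂ} (hω : ω ≠ 0)
    (e : Equiv.Perm (Fin r)) :
    schur lam (fun j => ω * z (e j)) = ω ^ (∑ i, lam i) * schur lam z := by
  have hsign : (Equiv.Perm.sign e : ℂ) ≠ 0 := by
    rcases Int.units_eq_one_or (Equiv.Perm.sign e) with h | h <;> simp [h]
  rw [schur, schur, det_of_mul_zpow_comp_perm z hω, det_of_mul_zpow_comp_perm z hω,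
    mul_div_mul_comm, mul_div_mul_comm, div_self hsign, one_mul, ← zpow_sub₀ hω,
    ← Finset.sum_sub_distrib]
  simp

lemma zeta_eq_mul_comp_of_modEq {r k : ℕ} (hrk : r + k ≠ 0) {v w : Fin r → ℤ}
    (σ : Equiv.Perm (Fin r)) (c : ℤ) (h : ∀ i, w i ≡ v (σ i) + c [ZMOD (r + k)]) :
    zeta r k w = fun j =>
      Complex.exp (2 * (Real.pi : ℂ) * Complex.I * c / ((r : ℂ) + (k : ℂ))) * zeta r k v (σ j) := by
  have hN : (r : ℂ) + (k : ℂ) ≠ 0 := by exact_mod_cast hrk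
  funext j
  obtain ⟨m, hm⟩ := (h j).dvd
  have hw : (w j : ℂ) = v (σ j) + c - (r + k) * m := by
    have := congrArg (Int.cast : ℤ → ℂ) hm
    push_cast at this
    linear_combination -this
  simp only [zeta, ← Complex.exp_add]
  rw [show 2 * (Real.pi : ℂ) * Complex.I * (w j : ℂ) / ((r : ℂ) + (k : ℂ)) =
      2 * Real.pi * Complex.I * c / (r + k) + 2 * Real.pi * Complex.I * (v (σ j) : ℂ) / (r + k) +
        (-m : ℤ) * (2 * Real.pi * Complex.I) by
    rw [hw]; field_simp; push_cast; ring]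
  rw [Complex.exp_add _ ((-m : ℤ) * _), Complex.exp_int_mul_two_pi_mul_I, mul_one]

lemma Dv_eq_of_modEq {r k : ℕ} (hrk : r + k ≠ 0) {v w : Fin r → ℤ}
    (σ : Equiv.Perm (Fin r)) (c : ℤ) (h : ∀ i, w i ≡ v (σ i) + c [ZMOD (r + k)]) :
    Dv r k w = Dv r k v := by
  have hN : (r : ℝ) + (k : ℝ) ≠ 0 := by exact_mod_cast hrk
  set F : Fin r → Fin r → ℝ := fun i j =>
    (2 * Real.sin (Real.pi * ((v i : ℝ) - (v j : ℝ)) / ((r : ℝ) + (k : ℝ)))) ^ 2 with hF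
  have hF_symm : ∀ i j, F i j = F j i := fun i j => by
    simp only [hF, ← neg_sub (v i : ℝ), mul_neg, neg_div, Real.sin_neg, mul_neg, neg_sq]
  unfold Dv
  rw [← Finset.prod_filter_lt_comp_perm F hF_symm σ]
  refine Finset.prod_congr rfl fun p _ => ?_
  obtain ⟨m, hm⟩ := ((h p.1).sub (h p.2)).dvd
  have hw : ((w p.1 : ℝ) - w p.2) = (v (σ p.1) - v (σ p.2)) + (r + k) * (-m : ℤ) := by
    have := congrArg (Int.cast : ℤ → ℝ) hm
    push_cast at this ⊢
    linear_combination -this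
  have harg : Real.pi * ((w p.1 : ℝ) - w p.2) / (r + k) =
      Real.pi * ((v (σ p.1) : ℝ) - v (σ p.2)) / (r + k) + ((-m : ℤ) : ℝ) * Real.pi := by
    rw [hw]; field_simp
  rw [harg, Real.sq_two_mul_sin_add_int_mul_pi]

lemma mem_Vset_succ {n k : ℕ} {v : Fin (n + 1) → ℤ} :
    v ∈ Vset (n + 1) k ↔
      (∀ i, 0 ≤ v i ∧ v i ≤ ((n + 1 : ℕ) : ℤ) + k - 1) ∧ StrictAnti v ∧ v (Fin.last n) = 0 := by
  simp only [Vset, Finset.mem_filter, Finset.mem_Icc, Pi.le_def, StrictAnti, forall_and]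
  refine and_congr Iff.rfl (and_congr Iff.rfl ⟨fun h => h _ rfl, fun h i hi => ?_⟩)
  rwa [show i = Fin.last n from Fin.ext hi]

def rotate (k : ℕ) {n : ℕ} (v : Fin (n + 1) → ℤ) : Fin (n + 1) → ℤ := fun j =>
  v (finRotate (n + 1) j) - v 0 + if j = Fin.last n then 0 else ((n + 1 : ℕ) : ℤ) + k

section rotate

variable {n k : ℕ} {v : Fin (n + 1) → ℤ}

lemma rotate_modEq (j : Fin (n + 1)) :
    rotate k v j ≡ v (finRotate (n + 1) j) + -v 0 [ZMOD (((n + 1 : ℕ) : ℤ) + k)] := by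
  unfold rotate
  split_ifs
  · simp [sub_eq_add_neg]
  · refine Int.modEq_iff_dvd.mpr ⟨-1, ?_⟩
    push_cast; ring

lemma sum_rotate :
    ∑ j, rotate k v j = ∑ j, v j - (n + 1) * v 0 + n * (((n + 1 : ℕ) : ℤ) + k) := by
  simp only [rotate, Finset.sum_add_distrib, Finset.sum_sub_distrib,
    Equiv.sum_comp (finRotate (n + 1)) v, Finset.sum_ite]
  simp [Finset.filter_ne', Finset.card_erase_of_mem]
  ring

lemma rotate_mem_Vset (hv : v ∈ Vset (n + 1) k) : rotate k v ∈ Vset (n + 1) k := by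
  obtain ⟨hbd, hanti, hlast⟩ := mem_Vset_succ.mp hv
  have hlt : ∀ j, j ≠ Fin.last n → v (finRotate (n + 1) j) < v 0 := fun j hj =>
    hanti (Fin.pos_iff_ne_zero.mpr (finRotate_last (n := n) ▸ (finRotate (n + 1)).injective.ne hj))
  refine mem_Vset_succ.mpr ⟨fun j => ?_, fun i j hij => ?_, ?_⟩
  · unfold rotate
    split_ifs with hj
    · subst hj; simp; omega
    · have := hbd (finRotate (n + 1) j); have := hbd 0; have := hlt j hj; omega
  · have hi : i ≠ Fin.last n := Fin.ne_last_of_lt hij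
    unfold rotate
    rw [if_neg hi]
    split_ifs with hj
    · subst hj
      rw [finRotate_last]
      have := hbd (finRotate (n + 1) i); have := hbd 0; omega
    · have : finRotate (n + 1) i < finRotate (n + 1) j := by
        rw [Fin.lt_def, coe_finRotate_of_ne_last hi, coe_finRotate_of_ne_last hj]
        exact Nat.succ_lt_succ hij
      have := hanti this; omega
  · simp only [rotate, finRotate_last, sub_self, ↓reduceIte, add_zero]

lemma injOn_rotate : Set.InjOn (rotate k) (Vset (n + 1) k : Set (Fin (n + 1) → ℤ)) := by
  intro v hv w hw hvw
  have hdiff : ∀ i, v i - v 0 = w i - w 0 := fun i => by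
    have := congrFun hvw ((finRotate (n + 1)).symm i)
    simpa [rotate] using this
  have h0 : v 0 = w 0 := by
    have := hdiff (Fin.last n)
    rw [(mem_Vset_succ.mp hv).2.2, (mem_Vset_succ.mp hw).2.2] at this
    omega
  funext i
  linarith [hdiff i]

lemma zeta_rotate (v : Fin (n + 1) → ℤ) :
    zeta (n + 1) k (rotate k v) = fun j =>
      Complex.exp (2 * Real.pi * Complex.I * ((-v 0 : ℤ) : ℂ) / (((n + 1 : ℕ) : ℂ) + k)) *
        zeta (n + 1) k v (finRotate _ j) :=
  zeta_eq_mul_comp_of_modEq (by omega) _ _ rotate_modEq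

lemma Dv_rotate (v : Fin (n + 1) → ℤ) : Dv (n + 1) k (rotate k v) = Dv (n + 1) k v :=
  Dv_eq_of_modEq (by omega) _ _ rotate_modEq

end rotate

def verlindeTerm (r k g : ℕ) (d : ℤ) {I : Type*} [Fintype I] (lam : I → Fin r → ℤ)
    (v : Fin r → ℤ) : ℂ :=
  Complex.exp (2 * (Real.pi : ℂ) * Complex.I *
      ((d : ℂ) / (r : ℂ) - (∑ x, ∑ i, (lam x i : ℂ)) / ((r : ℂ) * ((r : ℂ) + (k : ℂ)))) *
      (∑ i, (v i : ℂ))) *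
    (∏ x, schur (lam x) (zeta r k v)) * ((Dv r k v : ℂ)) ^ (1 - (g : ℤ))

lemma verlinde_eq_mul_sum_verlindeTerm (r k g : ℕ) (d : ℤ) {I : Type*} [Fintype I]
    (lam : I → Fin r → ℤ) :
    verlinde r k g d lam = (-1 : ℂ) ^ (d * ((r : ℤ) - 1)) * ((k : ℂ) / (r : ℂ)) ^ g *
      ((r : ℂ) * ((r : ℂ) + (k : ℂ)) ^ (r - 1)) ^ ((g : ℤ) - 1) *
      ∑ v ∈ Vset r k, verlindeTerm r k g d lam v :=
  rfl

lemma verlindeTerm_rotate {n k g : ℕ} {d : ℤ} {I : Type*} [Fintype I]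
    (lam : I → Fin (n + 1) → ℤ) (v : Fin (n + 1) → ℤ) :
    verlindeTerm (n + 1) k g d lam (rotate k v) =
      Complex.exp (2 * Real.pi * Complex.I * ((∑ x, ∑ i, lam x i - d * k : ℤ) : ℂ) / (n + 1 : ℕ)) *
        verlindeTerm (n + 1) k g d lam v := by
  set c : ℂ := 2 * Real.pi * Complex.I * ((-v 0 : ℤ) : ℂ) / (((n + 1 : ℕ) : ℂ) + k) with hc
  have hschur : ∏ x, schur (lam x) (zeta (n + 1) k (rotate k v)) =
      Complex.exp (((∑ x, ∑ i, lam x i : ℤ) : ℂ) * c) * ∏ x, schur (lam x) (zeta (n + 1) k v) := by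
    simp only [zeta_rotate, ← hc, schur_mul_comp_perm _ _ (Complex.exp_ne_zero c),
      Finset.prod_mul_distrib, Finset.prod_zpow_eq_zpow_sum _ (Complex.exp_ne_zero c),
      Complex.exp_int_mul]
  have hsum : ∑ i, (rotate k v i : ℂ) =
      ∑ i, (v i : ℂ) - (n + 1) * v 0 + n * (((n + 1 : ℕ) : ℂ) + k) := by
    exact_mod_cast congrArg (fun t : ℤ => (t : ℂ)) (sum_rotate (k := k) (v := v))
  simp only [verlindeTerm, hschur, Dv_rotate, hsum]
  set L : ℤ := ∑ x, ∑ i, lam x i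
  set A : ℂ := 2 * Real.pi * Complex.I *
    ((d : ℂ) / (n + 1 : ℕ) - (∑ x, ∑ i, (lam x i : ℂ)) / ((n + 1 : ℕ) * (((n + 1 : ℕ) : ℂ) + k)))
  have hexp : Complex.exp (A * (∑ i, (v i : ℂ) - (n + 1) * v 0 + n * (((n + 1 : ℕ) : ℂ) + k))) *
        Complex.exp (L * c) =
      Complex.exp (2 * Real.pi * Complex.I * ((L - d * k : ℤ) : ℂ) / (n + 1 : ℕ)) *
        Complex.exp (A * ∑ i, (v i : ℂ)) := by
    have hN : ((n + 1 : ℕ) : ℂ) + k ≠ 0 := by exact_mod_cast (by omega : n + 1 + k ≠ 0)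
    have hr : ((n + 1 : ℕ) : ℂ) ≠ 0 := by exact_mod_cast n.succ_ne_zero
    have hL : (L : ℂ) = ∑ x, ∑ i, (lam x i : ℂ) := by simp only [L, Int.cast_sum]
    have harg : A * (∑ i, (v i : ℂ) - (n + 1) * v 0 + n * (((n + 1 : ℕ) : ℂ) + k)) + L * c =
        2 * Real.pi * Complex.I * ((L - d * k : ℤ) : ℂ) / (n + 1 : ℕ) + A * ∑ i, (v i : ℂ) +
          ((d * (n + k - v 0) - L : ℤ) : ℂ) * (2 * Real.pi * Complex.I) := by
      simp only [A, hc, ← hL]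
      push_cast at hN hr ⊢
      field_simp
      ring
    rw [← Complex.exp_add, harg, Complex.exp_add, Complex.exp_int_mul_two_pi_mul_I, mul_one,
      Complex.exp_add]
  rw [← mul_assoc, hexp]
  ring

theorem verlinde_eq_zero_of_not_dvd {n k g : ℕ} {d : ℤ} {I : Type*} [Fintype I]
    (lam : I → Fin (n + 1) → ℤ) (h : ¬ ((n + 1 : ℕ) : ℤ) ∣ ∑ x, ∑ i, lam x i - d * k) :
    verlinde (n + 1) k g d lam = 0 := by
  rw [verlinde_eq_mul_sum_verlindeTerm,
    Finset.sum_eq_zero_of_map_eq_mul (fun _ hv => rotate_mem_Vset hv) injOn_rotate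
      (Complex.exp_two_pi_I_mul_div_ne_one n.succ_ne_zero h) (fun v _ => verlindeTerm_rotate lam v),
    mul_zero]

theorem verlinde_vanishing_of_not_dvd_general (r k : ℕ)
    {I : Type*} [Fintype I] (lam : I → Fin r → ℤ)
    (hnd : ¬ ((r : ℤ) ∣ ∑ x, ∑ i, lam x i)) :
    verlinde r k 0 0 lam = 0 := by
  cases r with
  | zero => simp at hnd
  | succ n => exact verlinde_eq_zero_of_not_dvd lam (by simpa using hnd)

/-- if `r ∤ Σ_x |λ_x|` then `V_0(r,0,(λ_x)) = 0`. -/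
theorem verlinde_vanishing_of_not_dvd (r k : ℕ) (hr : 1 ≤ r) (hk : 1 ≤ k)
    {I : Type*} [Fintype I] (lam : I → Fin r → ℤ) (hlam : ∀ x, lam x ∈ Pbar r k)
    (hnd : ¬ ((r : ℤ) ∣ ∑ x, ∑ i, lam x i)) :
    verlinde r k 0 0 lam = 0 :=
  verlinde_vanishing_of_not_dvd_general r k lam hnd

end VerlindePaper
end
end

section
/- Let r ≥ 2, g ≥ 0, d ∈ ℤ, let (λ_x)_{x∈I′} be a finite family of vectors in P̄_k and λ_z ∈ P̄_k. Then the Verlinde numbers are invariant under the Hecke transformation H^1 in the sense that V_g(r,d,(λ_x)_{x∈I′} together with the extra weight λ_z) = V_g(r,d+1,(λ_x)_{x∈I′} together with the extra weight H^1(λ_z)). -/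
open scoped BigOperators
open Complex

noncomputable section

namespace VerlindePaper

/-! At a point `z` whose coordinates are `(r+k)`-th roots of unity, the exponent matrix
`(z_j^{λ_i+r-1-i})` of `H¹(μ)` is, up to a cyclic rotation of its rows, the one of `μ` with
column `j` scaled by `z_j^{-(μ_{r-1}+1)}`; the row that wraps around picks up an extra
`z_j^{r+k} = 1`. Hence `S_{H¹(μ)}(ζ_v) = (-1)^{r-1} ∏_j ζ_{v,j}^{-(μ_{r-1}+1)} S_μ(ζ_v)`.
Since `|H¹(μ)| = k + |μ| - r μ_{r-1}`, raising `d` to `d + 1` multiplies the exponential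
weight of `v` by exactly `∏_j ζ_{v,j}^{μ_{r-1}+1}`, and the sign `(-1)^{r-1}` is absorbed by
`(-1)^{d(r-1)}`. -/

section Hecke

variable (k n : ℕ) (μ : Fin (n + 2) → ℤ)

theorem sum_H1 : ∑ i, H1 k μ i = k + ∑ i, μ i - (n + 2) * μ ⟨n, by omega⟩ := by
  rw [Fin.sum_univ_succ, Fin.sum_univ_castSucc (f := μ)]
  have h0 : H1 k μ 0 = k - μ ⟨n, by omega⟩ + μ (Fin.last (n + 1)) := rfl
  have hsucc (j : Fin (n + 1)) : H1 k μ j.succ = μ j.castSucc - μ ⟨n, by omega⟩ := by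
    simp only [H1, Fin.val_succ, Nat.add_eq_zero_iff, one_ne_zero, and_false, if_false]
    rfl
  simp only [h0, hsucc, Finset.sum_sub_distrib, Finset.sum_const, Finset.card_univ,
    Fintype.card_fin, nsmul_eq_mul]
  push_cast
  ring

theorem H1_finRotate_add (i : Fin (n + 2)) :
    H1 k μ (finRotate _ i) + (((n + 2 : ℕ) : ℤ) - 1 - (finRotate _ i : ℕ)) =
      -(μ ⟨n, by omega⟩ + 1) + (μ i + (((n + 2 : ℕ) : ℤ) - 1 - (i : ℕ))) +
        if (i : ℕ) = n + 1 then ((n + 2 : ℕ) : ℤ) + k else 0 := by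
  by_cases hi : (i : ℕ) = n + 1
  · obtain rfl : i = Fin.last (n + 1) := Fin.ext hi
    simp only [finRotate_last, if_pos hi, H1, Fin.val_zero, if_true]
    change _ + μ ⟨n + 1, _⟩ + _ = _ + (μ ⟨n + 1, _⟩ + _) + _
    push_cast
    ring
  · have hrot : finRotate _ i = ⟨i + 1, by omega⟩ := finRotate_of_lt (by omega)
    simp only [hrot, if_neg hi, H1, Nat.add_eq_zero_iff, one_ne_zero, and_false, if_false,
      Nat.add_sub_cancel]
    push_cast
    ring

variable {k n}

theorem det_H1_of_zpow_eq_one (z : Fin (n + 2) → ℂ) (hz₀ : ∀ j, z j ≠ 0)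
    (hz : ∀ j, z j ^ (((n + 2 : ℕ) : ℤ) + k) = 1) :
    (Matrix.of fun i j => z j ^ (H1 k μ i + (((n + 2 : ℕ) : ℤ) - 1 - (i : ℕ)))).det =
      (-1) ^ (n + 1) * (∏ j, z j ^ (-(μ ⟨n, by omega⟩ + 1))) *
        (Matrix.of fun i j => z j ^ (μ i + (((n + 2 : ℕ) : ℤ) - 1 - (i : ℕ)))).det := by
  set N := Matrix.of fun i j => z j ^ (H1 k μ i + (((n + 2 : ℕ) : ℤ) - 1 - (i : ℕ)))
  set M := Matrix.of fun i j => z j ^ (μ i + (((n + 2 : ℕ) : ℤ) - 1 - (i : ℕ)))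
  have hrotated : N.submatrix (finRotate _) id =
      Matrix.of fun i j => z j ^ (-(μ ⟨n, by omega⟩ + 1)) * M i j := by
    ext i j
    simp only [N, M, Matrix.submatrix_apply, id_eq, Matrix.of_apply, H1_finRotate_add]
    split_ifs
    · rw [zpow_add₀ (hz₀ j) _ (_ + _), hz j, mul_one, zpow_add₀ (hz₀ j)]
    · rw [add_zero, zpow_add₀ (hz₀ j)]
  have hN : N = (N.submatrix (finRotate _) id).submatrix (finRotate _).symm id := by
    ext i j
    simp
  rw [hN, Matrix.det_permute, Equiv.Perm.sign_symm, hrotated, Matrix.det_mul_row,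
    sign_finRotate]
  push_cast
  ring

theorem schur_H1_of_zpow_eq_one (z : Fin (n + 2) → ℂ) (hz₀ : ∀ j, z j ≠ 0)
    (hz : ∀ j, z j ^ (((n + 2 : ℕ) : ℤ) + k) = 1) :
    schur (H1 k μ) z = (-1) ^ (n + 1) * (∏ j, z j ^ (-(μ ⟨n, by omega⟩ + 1))) * schur μ z := by
  rw [schur, schur, det_H1_of_zpow_eq_one μ z hz₀ hz, mul_div_assoc]

end Hecke

section Zeta

variable (r k : ℕ) (v : Fin r → ℤ)

theorem zeta_zpow (j : Fin r) (t : ℤ) :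
    zeta r k v j ^ t = exp (2 * Real.pi * I * t * v j / (r + k)) := by
  rw [zeta, ← exp_int_mul]
  ring_nf

theorem zeta_zpow_eq_one (j : Fin r) : zeta r k v j ^ ((r : ℤ) + k) = 1 := by
  have hrk : (r : ℂ) + k ≠ 0 := by exact_mod_cast (by have := j.pos; omega : r + k ≠ 0)
  rw [zeta_zpow, ← exp_int_mul_two_pi_mul_I (v j)]
  congr 1
  push_cast
  field_simp

theorem prod_zeta_zpow (t : ℤ) :
    ∏ j, zeta r k v j ^ t = exp (2 * Real.pi * I * t * (∑ i, (v i : ℂ)) / (r + k)) := by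
  simp only [zeta_zpow, ← exp_sum, ← Finset.sum_div, ← Finset.mul_sum]

end Zeta

theorem exp_phase_succ_mul (r k s A B : ℂ) (d c : ℤ) (hr : r ≠ 0) (hrk : r + k ≠ 0)
    (hB : B = A + k - r * c) :
    exp (2 * Real.pi * I * (((d + 1 : ℤ) : ℂ) / r - B / (r * (r + k))) * s) *
        exp (2 * Real.pi * I * (-(c + 1) : ℤ) * s / (r + k)) =
      exp (2 * Real.pi * I * (d / r - A / (r * (r + k))) * s) := by
  rw [← exp_add, hB]
  congr 1
  push_cast
  field_simp
  ring

def verlindeSummand (r k g : ℕ) (d : ℤ) {ι : Type*} [Fintype ι] (lam : ι → Fin r → ℤ)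
    (v : Fin r → ℤ) : ℂ :=
  exp (2 * Real.pi * I * ((d : ℂ) / r - (∑ x, ∑ i, (lam x i : ℂ)) / ((r : ℂ) * (r + k))) *
      ∑ i, (v i : ℂ)) *
    (∏ x, schur (lam x) (zeta r k v)) * (Dv r k v : ℂ) ^ (1 - (g : ℤ))

theorem verlinde_eq_sum_verlindeSummand (r k g : ℕ) (d : ℤ) {ι : Type*} [Fintype ι]
    (lam : ι → Fin r → ℤ) :
    verlinde r k g d lam =
      (-1 : ℂ) ^ (d * ((r : ℤ) - 1)) * ((k : ℂ) / r) ^ g *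
        ((r : ℂ) * (r + k) ^ (r - 1)) ^ ((g : ℤ) - 1) *
        ∑ v ∈ Vset r k, verlindeSummand r k g d lam v :=
  rfl

theorem neg_one_pow_mul_verlindeSummand_H1 (n k g : ℕ) (d : ℤ) {ι : Type*} [Fintype ι]
    (lam : ι → Fin (n + 2) → ℤ) (lamZ : Fin (n + 2) → ℤ) (v : Fin (n + 2) → ℤ) :
    (-1) ^ (n + 1) * verlindeSummand (n + 2) k g d (fun o : Option ι => o.elim lamZ lam) v =
      verlindeSummand (n + 2) k g (d + 1) (fun o : Option ι => o.elim (H1 k lamZ) lam) v := by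
  have hr : ((n + 2 : ℕ) : ℂ) ≠ 0 := by exact_mod_cast (by omega : n + 2 ≠ 0)
  have hrk : ((n + 2 : ℕ) : ℂ) + k ≠ 0 := by exact_mod_cast (by omega : n + 2 + k ≠ 0)
  have hsum : ∑ i, (H1 k lamZ i : ℂ) =
      k + ∑ i, (lamZ i : ℂ) - ((n + 2 : ℕ) : ℂ) * (lamZ ⟨n, by omega⟩ : ℂ) := by
    exact_mod_cast sum_H1 k n lamZ
  have hschur := schur_H1_of_zpow_eq_one lamZ (zeta (n + 2) k v) (fun j => exp_ne_zero _)
    (zeta_zpow_eq_one (n + 2) k v)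
  simp only [verlindeSummand, Fintype.sum_option, Fintype.prod_option, Option.elim_none,
    Option.elim_some, hschur, prod_zeta_zpow]
  rw [← exp_phase_succ_mul _ _ _ _ (∑ i, (H1 k lamZ i : ℂ) + ∑ x, ∑ i, (lam x i : ℂ)) d
    (lamZ ⟨n, by omega⟩) hr hrk (by rw [hsum]; ring)]
  ring

theorem verlinde_hecke_invariance_general (r k : ℕ) (hr : 2 ≤ r)
    (g : ℕ) (d : ℤ) {I : Type*} [Fintype I]
    (lam : I → Fin r → ℤ)
    (lamZ : Fin r → ℤ) :
    verlinde r k g d (fun o : Option I => o.elim lamZ lam) =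
      verlinde r k g (d + 1) (fun o : Option I => o.elim (H1 k lamZ) lam) := by
  obtain ⟨n, rfl⟩ : ∃ n, r = n + 2 := ⟨r - 2, by omega⟩
  have hsign : (-1 : ℂ) ^ ((d + 1) * (((n + 2 : ℕ) : ℤ) - 1)) * (-1) ^ (n + 1) =
      (-1) ^ (d * (((n + 2 : ℕ) : ℤ) - 1)) := by
    rw [show (d + 1) * (((n + 2 : ℕ) : ℤ) - 1) = d * (((n + 2 : ℕ) : ℤ) - 1) + (n + 1 : ℕ) by
        push_cast; ring, zpow_add₀ (neg_ne_zero.2 one_ne_zero), zpow_natCast, mul_assoc,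
      ← pow_add, Even.neg_one_pow ⟨n + 1, rfl⟩, mul_one]
  simp only [verlinde_eq_sum_verlindeSummand, ← hsign, ← neg_one_pow_mul_verlindeSummand_H1,
    ← Finset.mul_sum]
  ring

/-- invariance of Verlinde numbers under the Hecke transformation `H¹`:
`V_g(r,d,(λ_x)∪{λ_z}) = V_g(r,d+1,(λ_x)∪{H¹(λ_z)})`. -/
theorem verlinde_hecke_invariance (r k : ℕ) (hr : 2 ≤ r) (hk : 1 ≤ k)
    (g : ℕ) (d : ℤ) {I : Type*} [Fintype I]
    (lam : I → Fin r → ℤ) (hlam : ∀ x, lam x ∈ Pbar r k)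
    (lamZ : Fin r → ℤ) (hZ : lamZ ∈ Pbar r k) :
    verlinde r k g d (fun o : Option I => o.elim lamZ lam) =
      verlinde r k g (d + 1) (fun o : Option I => o.elim (H1 k lamZ) lam) :=
  verlinde_hecke_invariance_general r k hr g d lam lamZ

end VerlindePaper
end
end

section
/- Let r ≥ 2 and μ ∈ P̄_k. For 1 ≤ m ≤ r−1 one has |H^m(μ)| = k·m − r·μ_{r−m} + |μ|, and |H^r(μ)| = |μ| − r·μ_r. -/
open scoped BigOperators
open Complex

noncomputable section

namespace VerlindePaper

/-!
Up to subtracting the constant vector `ν_{r-1}`, `H¹ν` is `ν` rotated one place with `k` added to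
the entry that wraps around (indices 1-based here). Hence `|H¹ν| = k + |ν| - r·ν_{r-1}`, and `H¹`
shifts the consecutive differences `ν_j - ν_{j+1}` one place to the right. Since the last entry of
`H^m μ` vanishes for `m ≥ 1`, its entry `r-1` is the difference `μ_{r-1-m} - μ_{r-m}` (and
`k + μ_r - μ_1` for `m = r-1`), which turns the recursion for `|H^m μ|` into the closed formulas.
-/

section

variable {k r : ℕ}

-- Indices are `Fin r` variables constrained by equations on their values, so that no rewriting
-- inside the bound proofs of `⟨i, h⟩ : Fin r` is ever needed.

lemma H1_apply_of_val_eq_zero (ν : Fin r → ℤ) {i l l' : Fin r} (hi : (i : ℕ) = 0)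
    (hl : (l : ℕ) + 2 = r) (hl' : (l' : ℕ) + 1 = r) :
    H1 k ν i = k - ν l + ν l' := by
  have hl_eq : (⟨r - 2, by omega⟩ : Fin r) = l := Fin.ext (by simp; omega)
  have hl'_eq : (⟨r - 1, by omega⟩ : Fin r) = l' := Fin.ext (by simp; omega)
  simp [H1, hi, hl_eq, hl'_eq]

lemma H1_apply_of_val_eq_succ (ν : Fin r → ℤ) {i j l : Fin r} (hij : (i : ℕ) = j + 1)
    (hl : (l : ℕ) + 2 = r) :
    H1 k ν i = ν j - ν l := by
  have hl_eq : (⟨r - 2, by omega⟩ : Fin r) = l := Fin.ext (by simp; omega)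
  simp [H1, hij, hl_eq]

lemma sum_H1_s15 (ν : Fin r → ℤ) {l : Fin r} (hl : (l : ℕ) + 2 = r) :
    ∑ i, H1 k ν i = k + ∑ i, ν i - r * ν l := by
  obtain ⟨n, rfl⟩ : ∃ n, r = n + 1 := ⟨r - 1, by omega⟩
  rw [Fin.sum_univ_succ, Fin.sum_univ_castSucc,
    H1_apply_of_val_eq_zero ν rfl hl (l' := Fin.last n) (by simp),
    Finset.sum_congr rfl fun i _ => H1_apply_of_val_eq_succ ν (j := i.castSucc) (by simp) hl,
    Finset.sum_sub_distrib]
  simp only [Finset.sum_const, Finset.card_univ, Fintype.card_fin, Int.nsmul_eq_mul,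
    Nat.cast_add, Nat.cast_one]
  ring

lemma Hm_zero (ν : Fin r → ℤ) : Hm k 0 ν = ν := rfl

lemma Hm_succ (m : ℕ) (ν : Fin r → ℤ) : Hm k (m + 1) ν = Hm k m (H1 k ν) :=
  Function.iterate_succ_apply _ _ _

lemma Hm_succ' (m : ℕ) (ν : Fin r → ℤ) : Hm k (m + 1) ν = H1 k (Hm k m ν) :=
  Function.iterate_succ_apply' _ _ _

lemma sum_Hm_succ (m : ℕ) (ν : Fin r → ℤ) {l : Fin r} (hl : (l : ℕ) + 2 = r) :
    ∑ i, Hm k (m + 1) ν i = k + ∑ i, Hm k m ν i - r * Hm k m ν l := by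
  rw [Hm_succ', sum_H1_s15 _ hl]

lemma Hm_apply_sub_Hm_apply (m : ℕ) (ν : Fin r → ℤ) {i i' j j' : Fin r}
    (hi : (i : ℕ) = j + m) (hi' : (i' : ℕ) = j' + m) :
    Hm k m ν i - Hm k m ν i' = ν j - ν j' := by
  induction m generalizing i i' with
  | zero => rw [Fin.ext hi, Fin.ext hi', Hm_zero]
  | succ m ih =>
    have := i.isLt
    have hl : ((⟨r - 2, by omega⟩ : Fin r) : ℕ) + 2 = r := by simp; omega
    rw [Hm_succ', H1_apply_of_val_eq_succ (Hm k m ν) (j := ⟨j + m, by omega⟩) (by simp; omega) hl,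
      H1_apply_of_val_eq_succ (Hm k m ν) (j := ⟨j' + m, by omega⟩) (by simp; omega) hl,
      sub_sub_sub_cancel_right, ih rfl rfl]

lemma Hm_apply_eq_zero (hr : 2 ≤ r) (m : ℕ) (ν : Fin r → ℤ) {i : Fin r} (hi : (i : ℕ) + 1 = r) :
    Hm k (m + 1) ν i = 0 := by
  have hl : ((⟨r - 2, by omega⟩ : Fin r) : ℕ) + 2 = r := by simp; omega
  rw [Hm_succ', H1_apply_of_val_eq_succ (Hm k m ν) (i := i) (j := ⟨r - 2, by omega⟩)
    (by simp; omega) hl, sub_self]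

lemma Hm_apply_penultimate {m : ℕ} (hm : 1 ≤ m) (ν : Fin r → ℤ) {l j j' : Fin r}
    (hl : (l : ℕ) + 2 = r) (hj : (j : ℕ) + m + 2 = r) (hj' : (j' : ℕ) + m + 1 = r) :
    Hm k m ν l = ν j - ν j' := by
  obtain ⟨m, rfl⟩ : ∃ m', m = m' + 1 := ⟨m - 1, by omega⟩
  rw [← sub_zero (Hm k (m + 1) ν l), ← Hm_apply_eq_zero (by omega) m ν (i := ⟨r - 1, by omega⟩)
    (by simp; omega)]
  exact Hm_apply_sub_Hm_apply _ _ (by omega) (by simp; omega)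

lemma Hm_sub_one_apply_penultimate (ν : Fin r → ℤ) {l i₀ i₁ : Fin r} (hl : (l : ℕ) + 2 = r)
    (hi₀ : (i₀ : ℕ) = 0) (hi₁ : (i₁ : ℕ) + 1 = r) :
    Hm k (r - 1) ν l = k + ν i₁ - ν i₀ := by
  obtain ⟨n, rfl⟩ : ∃ n, r = n + 2 := ⟨r - 2, by omega⟩
  rw [show n + 2 - 1 = n + 1 by omega, ← sub_zero (Hm k (n + 1) ν l),
    ← Hm_apply_eq_zero (by omega) n ν hi₁, Hm_succ,
    Hm_apply_sub_Hm_apply n (H1 k ν) (i := l) (i' := i₁) (j := ⟨0, by omega⟩)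
      (j' := ⟨1, by omega⟩) (by simp; omega) (by simp; omega),
    H1_apply_of_val_eq_zero ν rfl hl hi₁,
    H1_apply_of_val_eq_succ ν (i := ⟨1, by omega⟩) (j := i₀) (by simp [hi₀]) hl]
  ring

end

/-- `|H^m(μ)| = km - rμ_{r-m} + |μ|` for `1 ≤ m ≤ r-1`, and
`|H^r(μ)| = |μ| - rμ_r`. -/
theorem sum_Hm (r k : ℕ) (hr : 2 ≤ r)
    (μ : Fin r → ℤ) :
    (∀ m : ℕ, 1 ≤ m → m ≤ r - 1 →
        ∑ i, Hm k m μ i =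
          (k : ℤ) * (m : ℤ) - (r : ℤ) * μ ⟨r - m - 1, by omega⟩ + ∑ i, μ i) ∧
      ∑ i, Hm k r μ i = (∑ i, μ i) - (r : ℤ) * μ ⟨r - 1, by omega⟩ := by
  have hl : ((⟨r - 2, by omega⟩ : Fin r) : ℕ) + 2 = r := by simp; omega
  have hsum : ∀ m : ℕ, 1 ≤ m → m ≤ r - 1 →
      ∑ i, Hm k m μ i = (k : ℤ) * m - r * μ ⟨r - m - 1, by omega⟩ + ∑ i, μ i := by
    intro m hm
    induction m, hm using Nat.le_induction with
    | base =>
      intro _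
      rw [sum_Hm_succ 0 μ (l := ⟨r - 1 - 1, by omega⟩) (by simp; omega), Hm_zero]
      ring
    | succ m hm ih =>
      intro hmr
      rw [sum_Hm_succ m μ hl, ih (by omega),
        Hm_apply_penultimate hm μ (j := ⟨r - (m + 1) - 1, by omega⟩)
          (j' := ⟨r - m - 1, by omega⟩) hl (by simp; omega) (by simp; omega)]
      push_cast
      ring
  refine ⟨hsum, ?_⟩
  have hlast := sum_Hm_succ (k := k) (r - 1) μ hl
  rw [Nat.sub_add_cancel (by omega)] at hlast
  rw [hlast, hsum (r - 1) (by omega) le_rfl,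
    Hm_sub_one_apply_penultimate μ (i₀ := ⟨r - (r - 1) - 1, by omega⟩) (i₁ := ⟨r - 1, by omega⟩) hl
      (by simp; omega) (by simp; omega)]
  push_cast [Nat.cast_sub (show 1 ≤ r by omega)]
  ring
end VerlindePaper
end
end
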